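/- Let K₂ = {w ∈ {a,b}* : the letters a and b each occur at least twice in w, and the first occurrence of a precedes the first occurrence of b} (this is the β-class of the word a²b², over two distinct letters a, b of 𝔄). Then the direct product L₂¹ × M(x) and the syntactic monoid M_synt(K₂) satisfy exactly the same identities (they generate the same variety). -/

import Mathlib

/-- Words over the countably infinite alphabet `ℕ`. -/
abbrev Word : Type := List ℕ

/-- A monoid `M` satisfies the identity `u ≈ v` if every substitution of letters by
elements of `M` (equivalently, every monoid homomorphism from the free monoid) equalizes
`u` and `v`. -/
def Satisfies (M : Type*) [Monoid M] (u v : Word) : Prop :=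
  ∀ φ : ℕ → M, (u.map φ).prod = (v.map φ).prod

/-- A set of words `W` is stable with respect to a monoid `M`. -/
def Stable (W : Set Word) (M : Type*) [Monoid M] : Prop :=
  ∀ u v : Word, u ∈ W → Satisfies M u v → v ∈ W

/-- `u` is a `τ`-term for the monoid `M`. -/
def IsTerm (τ : Word → Word → Prop) (M : Type*) [Monoid M] (u : Word) : Prop :=
  ∀ v : Word, Satisfies M u v → τ u v

/-- The set of simple letters of a word. -/
def simpSet (u : Word) : Set ℕ := {x | u.count x = 1}

/-- The set of multiple letters of a word. -/
def mulSet (u : Word) : Set ℕ := {x | 2 ≤ u.count x}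

/-- The set of letters of a word. -/
def conSet (u : Word) : Set ℕ := {x | x ∈ u}

/-- The monoid congruence on the free monoid generated by the pairs `(a, a²)`. -/
inductive tau1 : Word → Word → Prop
  | base (a : ℕ) : tau1 [a] [a, a]
  | refl (u : Word) : tau1 u u
  | symm {u v : Word} : tau1 u v → tau1 v u
  | trans {u v x : Word} : tau1 u v → tau1 v x → tau1 u x
  | append {u v u' v' : Word} : tau1 u v → tau1 u' v' → tau1 (u ++ u') (v ++ v')

/-- The relation γ. -/
def gamma (u v : Word) : Prop := simpSet u = simpSet v ∧ mulSet u = mulSet v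

/-- The relation `τ₁ ∧ γ`. -/
def tau1gamma (u v : Word) : Prop := tau1 u v ∧ gamma u v

/-- A word is block-simple if every factor all of whose letters are multiple
(in particular, every block) involves at most one letter. -/
def BlockSimple (u : Word) : Prop :=
  ∀ p f s : Word, u = p ++ f ++ s → (∀ x ∈ f, x ∈ mulSet u) →
    ∀ x ∈ f, ∀ y ∈ f, x = y

/-- `assemble m t A = A 0 ++ t 0 :: A 1 ++ t 1 :: ... ++ t (m-1) :: A m`:
the word with blocks `A i` separated by the letters `t i`. -/
def assemble (m : ℕ) (t : Fin m → ℕ) (A : Fin (m + 1) → Word) : Word :=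
  A 0 ++ (List.ofFn fun i : Fin m => t i :: A i.succ).flatten

/-- Common core of the relations `β` and `∼_Q`: `u` and `v` decompose into blocks
separated by the same simple letters in the same order, corresponding blocks have the
same content; when `withOrder = true`, in corresponding blocks the order of first
occurrences of letters coincides. -/
def betaAux (withOrder : Bool) (u v : Word) : Prop :=
  ∃ (m : ℕ) (t : Fin m → ℕ) (A B : Fin (m + 1) → Word),
    u = assemble m t A ∧ v = assemble m t B ∧
    (∀ i : Fin m, u.count (t i) = 1) ∧ (∀ i : Fin m, v.count (t i) = 1) ∧
    (∀ i : Fin (m + 1), ∀ x ∈ A i, x ∈ mulSet u) ∧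
    (∀ i : Fin (m + 1), ∀ x ∈ B i, x ∈ mulSet v) ∧
    (∀ i : Fin (m + 1), ∀ x : ℕ, x ∈ A i ↔ x ∈ B i) ∧
    (withOrder = true → ∀ i : Fin (m + 1), ∀ x y : ℕ, x ∈ A i → y ∈ A i → x ≠ y →
      ((A i).idxOf x < (A i).idxOf y ↔ (B i).idxOf x < (B i).idxOf y))

/-- The relation β. -/
def beta : Word → Word → Prop := betaAux true

/-- The relation `∼_Q` (β without the condition on the order of first occurrences). -/
def simQ : Word → Word → Prop := betaAux false

/-- The words `u_n` (letters: `a = 0`, `b = 1`, `t_k = k + 1`). -/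
def uW : ℕ → Word
  | 0 => [0, 0, 1, 1]
  | k + 1 => (if k % 2 = 0 then 0 else 1) :: (k + 2) :: uW k

/-- The words `v_n` (letters: `a = 0`, `b = 1`, `t_k = k + 1`). -/
def vW : ℕ → Word
  | 0 => [1, 1, 0, 0]
  | k + 1 => (if k % 2 = 0 then 0 else 1) :: (k + 2) :: vW k

/-- A monoid satisfies the identity system
`Σ_n = {xtx ≈ xtx², xtx ≈ x²tx, xy²x ≈ x²y², u_n ≈ v_n}`. -/
def SatSigma (n : ℕ) (N : Type*) [Monoid N] : Prop :=
  Satisfies N [0, 1, 0] [0, 1, 0, 0] ∧ Satisfies N [0, 1, 0] [0, 0, 1, 0] ∧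
  Satisfies N [0, 1, 1, 0] [0, 0, 1, 1] ∧ Satisfies N (uW n) (vW n)

/-- A monoid is finitely based. -/
def FinBased (M : Type*) [Monoid M] : Prop :=
  ∃ S : Finset (Word × Word),
    (∀ p ∈ S, Satisfies M p.1 p.2) ∧
    ∀ (N : Type) [Monoid N], (∀ p ∈ S, Satisfies N p.1 p.2) →
      ∀ u v : Word, Satisfies M u v → Satisfies N u v

/-- `U_n = x y₁² y₂² ⋯ y_n² x` (letters: `x = 0`, `y_i = i`). -/
def Uw (n : ℕ) : Word := 0 :: (((List.range n).map fun i => [i + 1, i + 1]).flatten ++ [0])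

/-- `V_n = x y₁² x y₂² x ⋯ x y_n² x` (letters: `x = 0`, `y_i = i`). -/
def Vw (n : ℕ) : Word := 0 :: ((List.range n).map fun i => [i + 1, i + 1, 0]).flatten

/-- The language `a⁺bb⁺ta⁺ = {aⁱ bʲ t aᵏ : i, k ≥ 1, j ≥ 2}` (`a = 0`, `b = 1`, `t = 2`). -/
def Lab : Set Word := {w | ∃ i j k : ℕ, 1 ≤ i ∧ 2 ≤ j ∧ 1 ≤ k ∧
  w = List.replicate i 0 ++ List.replicate j 1 ++ 2 :: List.replicate k 0}

/-- The β-class of `atb²a` as an explicit language: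
`{aⁱ t bʲ a w : i ≥ 1, j ≥ 2} ∪ {aⁱ t bʲ aᵏ b w : i, j, k ≥ 1}`, `w ∈ {a,b}*`
(`a = 0`, `b = 1`, `t = 2`). -/
def LatBBa : Set Word :=
  {w | (∃ i j : ℕ, 1 ≤ i ∧ 2 ≤ j ∧ ∃ r : Word, (∀ x ∈ r, x = 0 ∨ x = 1) ∧
      w = List.replicate i 0 ++ 2 :: (List.replicate j 1 ++ 0 :: r)) ∨
    (∃ i j k : ℕ, 1 ≤ i ∧ 1 ≤ j ∧ 1 ≤ k ∧ ∃ r : Word, (∀ x ∈ r, x = 0 ∨ x = 1) ∧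
      w = List.replicate i 0 ++ 2 :: (List.replicate j 1 ++ (List.replicate k 0 ++ 1 :: r)))}

/-- `u` is a factor (subword) of `x`. -/
def IsFactorOf (u x : Word) : Prop := ∃ p s : Word, x = p ++ u ++ s

/-- The syntactic congruence of a language `W`. -/
def SyntCon (W : Set Word) : Con (FreeMonoid ℕ) where
  r u v := ∀ p s : Word,
    p ++ FreeMonoid.toList u ++ s ∈ W ↔ p ++ FreeMonoid.toList v ++ s ∈ W
  iseqv := ⟨fun _ _ _ => Iff.rfl, fun h p s => (h p s).symm,
    fun h h' p s => (h p s).trans (h' p s)⟩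
  mul' := by
    intro w x y z h h' p s
    have h1 := h p (FreeMonoid.toList y ++ s)
    have h2 := h' (p ++ FreeMonoid.toList x) s
    simp only [FreeMonoid.toList_mul, List.append_assoc] at h1 h2 ⊢
    exact h1.trans h2

/-- The syntactic monoid of a language `W`. -/
abbrev SyntMonoid (W : Set Word) : Type := (SyntCon W).Quotient

/-! ### Concrete finite monoids -/

/-- The 7-element monoid `A¹`: identity `e1` adjoined to the semigroup `A = ⟨a,b,c ∣ a²=a, b²=b, ab=ca=0, ac=cb=c⟩ = {a,b,c,ba,bc,0}` (`z0` is the zero). -/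
inductive A1M : Type
  | e1 | a | b | c | ba | bc | z0
deriving DecidableEq

/-- Multiplication of `A1M`. -/
def A1M.mul : A1M → A1M → A1M
  | .e1, .e1 => .e1
  | .e1, .a => .a
  | .e1, .b => .b
  | .e1, .c => .c
  | .e1, .ba => .ba
  | .e1, .bc => .bc
  | .e1, .z0 => .z0
  | .a, .e1 => .a
  | .a, .a => .a
  | .a, .b => .z0
  | .a, .c => .c
  | .a, .ba => .z0
  | .a, .bc => .z0
  | .a, .z0 => .z0
  | .b, .e1 => .b
  | .b, .a => .ba
  | .b, .b => .b
  | .b, .c => .bc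
  | .b, .ba => .ba
  | .b, .bc => .bc
  | .b, .z0 => .z0
  | .c, .e1 => .c
  | .c, .a => .z0
  | .c, .b => .c
  | .c, .c => .z0
  | .c, .ba => .z0
  | .c, .bc => .z0
  | .c, .z0 => .z0
  | .ba, .e1 => .ba
  | .ba, .a => .ba
  | .ba, .b => .z0
  | .ba, .c => .bc
  | .ba, .ba => .z0
  | .ba, .bc => .z0
  | .ba, .z0 => .z0
  | .bc, .e1 => .bc
  | .bc, .a => .z0
  | .bc, .b => .bc
  | .bc, .c => .z0
  | .bc, .ba => .z0
  | .bc, .bc => .z0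
  | .bc, .z0 => .z0
  | .z0, .e1 => .z0
  | .z0, .a => .z0
  | .z0, .b => .z0
  | .z0, .c => .z0
  | .z0, .ba => .z0
  | .z0, .bc => .z0
  | .z0, .z0 => .z0

instance : Monoid A1M where
  one := .e1
  mul := A1M.mul
  mul_assoc := by intro x y z; cases x <;> cases y <;> cases z <;> rfl
  one_mul := by intro x; cases x <;> rfl
  mul_one := by intro x; cases x <;> rfl
/-- The 6-element monoid `E¹`: identity `e1` adjoined to the semigroup `E = ⟨a,b,c ∣ a²=ab=0, ba=ca=a, b²=bc=b, c²=cb=c⟩ = {a,b,c,ac,0}` (`z0` is the zero). -/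
inductive E1M : Type
  | e1 | a | b | c | ac | z0
deriving DecidableEq

/-- Multiplication of `E1M`. -/
def E1M.mul : E1M → E1M → E1M
  | .e1, .e1 => .e1
  | .e1, .a => .a
  | .e1, .b => .b
  | .e1, .c => .c
  | .e1, .ac => .ac
  | .e1, .z0 => .z0
  | .a, .e1 => .a
  | .a, .a => .z0
  | .a, .b => .z0
  | .a, .c => .ac
  | .a, .ac => .z0
  | .a, .z0 => .z0
  | .b, .e1 => .b
  | .b, .a => .a
  | .b, .b => .b
  | .b, .c => .b
  | .b, .ac => .ac
  | .b, .z0 => .z0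
  | .c, .e1 => .c
  | .c, .a => .a
  | .c, .b => .c
  | .c, .c => .c
  | .c, .ac => .ac
  | .c, .z0 => .z0
  | .ac, .e1 => .ac
  | .ac, .a => .z0
  | .ac, .b => .ac
  | .ac, .c => .ac
  | .ac, .ac => .z0
  | .ac, .z0 => .z0
  | .z0, .e1 => .z0
  | .z0, .a => .z0
  | .z0, .b => .z0
  | .z0, .c => .z0
  | .z0, .ac => .z0
  | .z0, .z0 => .z0

instance : Monoid E1M where
  one := .e1
  mul := E1M.mul
  mul_assoc := by intro x y z; cases x <;> cases y <;> cases z <;> rfl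
  one_mul := by intro x; cases x <;> rfl
  mul_one := by intro x; cases x <;> rfl
/-- The 5-element monoid `A₀¹`: identity `e1` adjoined to the semigroup `A₀ = ⟨a,b ∣ a²=a, b²=b, ab=0⟩ = {a,b,ba,0}` (`z0` is the zero). -/
inductive A01M : Type
  | e1 | a | b | ba | z0
deriving DecidableEq

/-- Multiplication of `A01M`. -/
def A01M.mul : A01M → A01M → A01M
  | .e1, .e1 => .e1
  | .e1, .a => .a
  | .e1, .b => .b
  | .e1, .ba => .ba
  | .e1, .z0 => .z0
  | .a, .e1 => .a
  | .a, .a => .a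
  | .a, .b => .z0
  | .a, .ba => .z0
  | .a, .z0 => .z0
  | .b, .e1 => .b
  | .b, .a => .ba
  | .b, .b => .b
  | .b, .ba => .ba
  | .b, .z0 => .z0
  | .ba, .e1 => .ba
  | .ba, .a => .ba
  | .ba, .b => .z0
  | .ba, .ba => .z0
  | .ba, .z0 => .z0
  | .z0, .e1 => .z0
  | .z0, .a => .z0
  | .z0, .b => .z0
  | .z0, .ba => .z0
  | .z0, .z0 => .z0

instance : Monoid A01M where
  one := .e1
  mul := A01M.mul
  mul_assoc := by intro x y z; cases x <;> cases y <;> cases z <;> rfl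
  one_mul := by intro x; cases x <;> rfl
  mul_one := by intro x; cases x <;> rfl


/-- The 3-element monoid `L₂¹`: the two-element left-zero semigroup with identity adjoined. -/
inductive LZ1 : Type
  | e | a | b
deriving DecidableEq

instance : Fintype LZ1 := ⟨{.e, .a, .b}, by intro x; cases x <;> simp⟩

instance : Monoid LZ1 where
  one := .e
  mul x y := match x with
    | .e => y
    | .a => .a
    | .b => .b
  mul_assoc := by decide
  one_mul := by decide
  mul_one := by decide

/-- The 3-element monoid `M(x) = {1, x, 0}` with `x·x = 0`. -/
inductive MX : Type
  | e | x | z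
deriving DecidableEq

instance : Fintype MX := ⟨{.e, .x, .z}, by intro x; cases x <;> simp⟩

instance : Monoid MX where
  one := .e
  mul a b := match a, b with
    | .e, b => b
    | a, .e => a
    | _, _ => .z
  mul_assoc := by decide
  one_mul := by decide
  mul_one := by decide

/-! Membership of a word in `K₂` is decided by its first letter among `a, b` and by whether it
has a letter outside `{a, b}` (both computed in `L₂¹`), and by its numbers of `a`s and `b`s
capped at 2 (computed in `M(x)`). So `M_synt(K₂)` divides `L₂¹ × L₂¹ × M(x) × M(x)`.
Conversely `L₂¹` and `M(x)` embed into `M_synt(K₂)` as the classes of `1, a²b², b²a²` and of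
`1, a, a²`. -/

namespace Satisfies

variable {M N P : Type*} [Monoid M] [Monoid N] [Monoid P] {u v : Word}

theorem of_injective (f : N →* M) (hf : Function.Injective f) (h : Satisfies M u v) :
    Satisfies N u v := fun φ => hf <| by
  simpa only [map_list_prod, List.map_map] using h (f ∘ φ)

theorem fst (h : Satisfies (M × N) u v) : Satisfies M u v :=
  h.of_injective (MonoidHom.inl M N) fun _ _ hab => congrArg Prod.fst hab

theorem snd (h : Satisfies (M × N) u v) : Satisfies N u v :=
  h.of_injective (MonoidHom.inr M N) fun _ _ hab => congrArg Prod.snd hab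

theorem prod (hM : Satisfies M u v) (hN : Satisfies N u v) : Satisfies (M × N) u v := by
  intro φ
  refine Prod.ext ?_ ?_
  · change MonoidHom.fst M N _ = MonoidHom.fst M N _
    simpa only [map_list_prod, List.map_map] using hM _
  · change MonoidHom.snd M N _ = MonoidHom.snd M N _
    simpa only [map_list_prod, List.map_map] using hN _

/-- `N` divides `P`: it is a quotient of the submonoid `h(A)` of `P`. -/
theorem of_ker_le {A : Type*} [Monoid A] (g : A →* N) (hg : Function.Surjective g)
    (h : A →* P) (hker : ∀ x y, h x = h y → g x = g y) (hP : Satisfies P u v) :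
    Satisfies N u v := by
  intro φ
  obtain ⟨ψ, rfl⟩ : ∃ ψ : ℕ → A, g ∘ ψ = φ :=
    ⟨Function.surjInv hg ∘ φ, funext fun x => Function.surjInv_eq hg (φ x)⟩
  simp only [← List.map_map, ← map_list_prod]
  exact hker _ _ (by simpa only [map_list_prod, List.map_map] using hP (h ∘ ψ))

end Satisfies

theorem SyntCon.of_map_eq {W : Set Word} {P : Type*} [Monoid P] (h : FreeMonoid ℕ →* P)
    (S : Set P) (hW : ∀ w, w ∈ W ↔ h (FreeMonoid.ofList w) ∈ S) {x y : FreeMonoid ℕ}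
    (hxy : h x = h y) : SyntCon W x y := by
  intro p s
  simp only [hW, FreeMonoid.ofList_append, FreeMonoid.ofList_toList, map_mul, hxy]

theorem Satisfies.syntMonoid {W : Set Word} {P : Type*} [Monoid P] (h : FreeMonoid ℕ →* P)
    (S : Set P) (hW : ∀ w, w ∈ W ↔ h (FreeMonoid.ofList w) ∈ S) {u v : Word}
    (hP : Satisfies P u v) : Satisfies (SyntMonoid W) u v :=
  hP.of_ker_le _ (SyntCon W).mk'_surjective h fun _ _ hxy =>
    (SyntCon W).eq.mpr (SyntCon.of_map_eq h S hW hxy)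

theorem List.prod_map_ite_eq_pow_count {α M : Type*} [DecidableEq α] [Monoid M] (m : M) (a : α)
    (l : List α) :
    (l.map fun c => if c = a then m else 1).prod = m ^ l.count a := by
  induction l with
  | nil => simp
  | cons c l ih =>
    by_cases hc : c = a
    · simp [hc, ih, pow_succ']
    · simp [hc, ih, List.count_cons_of_ne hc]

theorem MX.mul_z (m : MX) : m * .z = .z := by
  cases m <;> rfl

theorem MX.x_pow_eq_z_iff (n : ℕ) : MX.x ^ n = .z ↔ 2 ≤ n := by
  rcases n with _ | _ | n
  · decide
  · decide
  · exact iff_of_true (by rw [add_assoc, pow_add]; exact MX.mul_z _) (by omega)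

@[simp] theorem LZ1.a_mul (m : LZ1) : .a * m = .a := rfl

@[simp] theorem LZ1.b_mul (m : LZ1) : .b * m = .b := rfl

theorem LZ1.list_prod_eq_one_iff {l : List LZ1} : l.prod = 1 ↔ ∀ m ∈ l, m = 1 := by
  induction l with
  | nil => simp
  | cons m l ih =>
    have hmul : ∀ m n : LZ1, m * n = 1 ↔ m = 1 ∧ n = 1 := by decide
    simp [hmul, ih]

def abFirst (c : ℕ) : LZ1 := if c = 0 then .a else if c = 1 then .b else 1

def nonAB (c : ℕ) : LZ1 := if c = 0 ∨ c = 1 then 1 else .a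

theorem prod_map_abFirst_eq_a_iff {w : Word} (h0 : 0 ∈ w) (h1 : 1 ∈ w) :
    (w.map abFirst).prod = .a ↔ w.idxOf 0 < w.idxOf 1 := by
  induction w with
  | nil => cases h0
  | cons c w ih =>
    rcases em (c = 0) with rfl | hc0
    · simp [abFirst]
    rcases em (c = 1) with rfl | hc1
    · simp [abFirst]
    have h0' : 0 ∈ w := (List.mem_cons.mp h0).resolve_left (Ne.symm hc0)
    have h1' : 1 ∈ w := (List.mem_cons.mp h1).resolve_left (Ne.symm hc1)
    simp [abFirst, hc0, hc1, List.idxOf_cons_ne, ih h0' h1']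

def K₂ : Set Word := {x : Word | (∀ c ∈ x, c = 0 ∨ c = 1) ∧
  2 ≤ x.count 0 ∧ 2 ≤ x.count 1 ∧ x.idxOf 0 < x.idxOf 1}

namespace K₂

def recognizer : FreeMonoid ℕ →* LZ1 × LZ1 × MX × MX :=
  (FreeMonoid.lift abFirst).prod <| (FreeMonoid.lift nonAB).prod <|
    (FreeMonoid.lift fun c => if c = 0 then MX.x else 1).prod
      (FreeMonoid.lift fun c => if c = 1 then MX.x else 1)

theorem mem_iff_recognizer (w : Word) :
    w ∈ K₂ ↔ recognizer (FreeMonoid.ofList w) ∈ ({(.a, 1, .z, .z)} : Set _) := by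
  simp only [Set.mem_singleton_iff, recognizer, MonoidHom.prod_apply, FreeMonoid.lift_ofList,
    Prod.mk.injEq, List.prod_map_ite_eq_pow_count, MX.x_pow_eq_z_iff,
    LZ1.list_prod_eq_one_iff, List.forall_mem_map, nonAB, K₂]
  constructor
  · rintro ⟨hab, h0, h1, hlt⟩
    have hfirst := (prod_map_abFirst_eq_a_iff (List.count_pos_iff.mp (by omega))
      (List.count_pos_iff.mp (by omega))).mpr hlt
    exact ⟨hfirst, fun c hc => if_pos (hab c hc), h0, h1⟩
  · rintro ⟨hfirst, hab, h0, h1⟩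
    have hlt := (prod_map_abFirst_eq_a_iff (List.count_pos_iff.mp (by omega))
      (List.count_pos_iff.mp (by omega))).mp hfirst
    refine ⟨fun c hc => ?_, h0, h1, hlt⟩
    by_contra hc'
    exact absurd ((if_neg hc').symm.trans (hab c hc)) (by decide)

instance : DecidablePred (· ∈ K₂) := fun _ =>
  inferInstanceAs (Decidable (_ ∧ _ ∧ _ ∧ _))

def mk (w : Word) : SyntMonoid K₂ := (SyntCon K₂).mk' (FreeMonoid.ofList w)

theorem mk_append (w₁ w₂ : Word) : mk (w₁ ++ w₂) = mk w₁ * mk w₂ :=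
  map_mul _ _ _

theorem mk_eq_mk {w₁ w₂ : Word}
    (h : recognizer (FreeMonoid.ofList w₁) = recognizer (FreeMonoid.ofList w₂)) :
    mk w₁ = mk w₂ :=
  (SyntCon K₂).eq.mpr (SyntCon.of_map_eq recognizer _ mem_iff_recognizer h)

theorem mk_ne_mk {w₁ w₂ : Word} (p s : Word) (h : ¬(p ++ w₁ ++ s ∈ K₂ ↔ p ++ w₂ ++ s ∈ K₂)) :
    mk w₁ ≠ mk w₂ :=
  fun he => h (by simpa using (SyntCon K₂).eq.mp he p s)

def embedLZ1 : LZ1 →* SyntMonoid K₂ where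
  toFun
    | .e => mk []
    | .a => mk [0, 0, 1, 1]
    | .b => mk [1, 1, 0, 0]
  map_one' := rfl
  map_mul' m n := by
    cases m <;> cases n <;> (rw [← mk_append]; exact mk_eq_mk (by decide))

theorem embedLZ1_injective : Function.Injective embedLZ1 := by
  intro m n h
  cases m <;> cases n <;> first
    | rfl
    | exact absurd h (mk_ne_mk [] [] (by decide))
    | exact absurd h (mk_ne_mk [0, 0] [] (by decide))

def embedMX : MX →* SyntMonoid K₂ where
  toFun
    | .e => mk []
    | .x => mk [0]
    | .z => mk [0, 0]
  map_one' := rfl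
  map_mul' m n := by
    cases m <;> cases n <;> (rw [← mk_append]; exact mk_eq_mk (by decide))

theorem embedMX_injective : Function.Injective embedMX := by
  intro m n h
  cases m <;> cases n <;> first
    | rfl
    | exact absurd h (mk_ne_mk [0] [1, 1] (by decide))
    | exact absurd h (mk_ne_mk [] [1, 1] (by decide))

end K₂

theorem stmt15 :
    ∀ u v : Word, Satisfies (LZ1 × MX) u v ↔
      Satisfies (SyntMonoid {x : Word | (∀ c ∈ x, c = 0 ∨ c = 1) ∧
        2 ≤ x.count 0 ∧ 2 ≤ x.count 1 ∧ x.idxOf 0 < x.idxOf 1}) u v := by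
  intro u v
  refine ⟨fun h => ?_, fun h => ?_⟩
  · have hLZ1 := h.fst
    have hMX := h.snd
    exact (hLZ1.prod (hLZ1.prod (hMX.prod hMX))).syntMonoid K₂.recognizer _
      K₂.mem_iff_recognizer
  · exact (h.of_injective _ K₂.embedLZ1_injective).prod (h.of_injective _ K₂.embedMX_injective)
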